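/- arXiv:2505.05226 — 2 statements merged into one kernel-verified Lean document; each statement's English description precedes it below -/
import Mathlib

section
/- Suppose each arm i ∈ {1,...,K} has rewards bounded above by b_i, and let N_i(T) denote the expected number of pulls of arm i up to time T, with Σ_i N_i(T) = T. If the per-arm maximum-gap bound E[max_{t≤T} r_{i,t}] - E[max_{t≤N_i(T)} r_{i,t}] ≤ (1 - N_i(T)/T)·b_i holds and Δ_{i*} = 0 for the optimal arm i*, then the extreme-bandit regret satisfies R(T) ≤ (max_{i≤K} b_i / T) · Σ_{i ≠ i*} N_i(T). -/
/-- Regret decomposition for extreme bandits: if rewards of arm `i` are bounded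
by `b i`, the expected pull counts `N i` sum to `T`, each arm satisfies the
maximum-gap bound `Emax i - EmaxN i ≤ (1 - N i / T)·b i`, the suboptimality gaps
are nonnegative (and zero at the optimal arm `i*`), and the regret `R` is at most
`Emax i* - EmaxN i*`, then `R ≤ (max_i b i / T)·Σ_{i ≠ i*} N i`. -/
theorem extreme_bandit_regret_decomposition (K : ℕ) (T : ℝ) (hT : 0 < T)
    (b N Emax EmaxN : Fin K → ℝ) (istar : Fin K)
    (hb : ∀ i, 0 ≤ b i) (hN : ∀ i, 0 ≤ N i)
    (hsum : ∑ i, N i = T)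
    (hgap : ∀ i, 0 ≤ Emax istar - Emax i)
    (hperarm : ∀ i, Emax i - EmaxN i ≤ (1 - N i / T) * b i)
    (R : ℝ) (hR : R ≤ Emax istar - EmaxN istar) :
    R ≤ (Finset.univ.sup' ⟨istar, Finset.mem_univ istar⟩ b / T)
        * ∑ i ∈ Finset.univ.erase istar, N i := by
  have hS : ∑ i ∈ Finset.univ.erase istar, N i = T - N istar := by
    rw [Finset.sum_erase_eq_sub (Finset.mem_univ istar), hsum]
  have hNT : N istar ≤ T := by
    rw [← hsum]
    exact Finset.single_le_sum (fun i _ => hN i) (Finset.mem_univ istar)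
  have hbsup : b istar ≤ Finset.univ.sup' ⟨istar, Finset.mem_univ istar⟩ b :=
    Finset.le_sup' b (Finset.mem_univ istar)
  calc R ≤ Emax istar - EmaxN istar := hR
    _ ≤ (1 - N istar / T) * b istar := hperarm istar
    _ = (T - N istar) / T * b istar := by field_simp
    _ ≤ (T - N istar) / T * Finset.univ.sup' ⟨istar, Finset.mem_univ istar⟩ b := by
        apply mul_le_mul_of_nonneg_left hbsup
        exact div_nonneg (by linarith) hT.le
    _ = (Finset.univ.sup' ⟨istar, Finset.mem_univ istar⟩ b / T)
        * ∑ i ∈ Finset.univ.erase istar, N i := by rw [hS]; ring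
end

section
/- With the choice α = 1/(4·L₁·√(min_{i≠i*} Δ_i))·(1 - 2·log(log T)/log T) and the per-arm bound N_i(T) ≤ T^{1-2L₁α√Δ_i}/(1-2L₁α√Δ_i) + 2α√(U_i T)·log T, the extreme-bandit regret satisfies R(T) ≤ O(K·log(T)/√T · max_i b_i). -/
open Finset


noncomputable def epsT (T : ℕ) : ℝ := 2 * Real.log (Real.log T) / Real.log T

lemma log_ge_one {T : ℕ} (hT : 3 ≤ T) : 1 ≤ Real.log T := by
  have h3 : (3:ℝ) ≤ (T:ℝ) := by exact_mod_cast hT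
  have he : Real.exp 1 ≤ (T:ℝ) := by
    have := Real.exp_one_lt_d9
    linarith
  calc (1:ℝ) = Real.log (Real.exp 1) := (Real.log_exp 1).symm
    _ ≤ Real.log T := Real.log_le_log (Real.exp_pos 1) he

lemma log_le_two_sqrt {u : ℝ} (hu : 0 < u) : Real.log u ≤ 2 * Real.sqrt u := by
  have h1 : Real.log (Real.sqrt u) ≤ Real.sqrt u - 1 :=
    Real.log_le_sub_one_of_pos (Real.sqrt_pos.mpr hu)
  have h2 : Real.log (Real.sqrt u) = Real.log u / 2 := Real.log_sqrt hu.le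
  linarith [Real.sqrt_nonneg u]

lemma two_log_le {u : ℝ} (hu : 1 ≤ u) : 2 * Real.log u ≤ u := by
  have h1 : Real.log (Real.sqrt u) ≤ Real.sqrt u - 1 :=
    Real.log_le_sub_one_of_pos (Real.sqrt_pos.mpr (by linarith))
  have h2 : Real.log (Real.sqrt u) = Real.log u / 2 := Real.log_sqrt (by linarith)
  have h3 : Real.sqrt u ^ 2 = u := Real.sq_sqrt (by linarith)
  nlinarith [sq_nonneg (Real.sqrt u - 2)]

lemma epsT_nonneg {T : ℕ} (hT : 3 ≤ T) : 0 ≤ epsT T := by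
  have h1 := log_ge_one hT
  have h2 : 0 ≤ Real.log (Real.log T) := Real.log_nonneg h1
  unfold epsT; positivity

lemma epsT_le_one {T : ℕ} (hT : 3 ≤ T) : epsT T ≤ 1 := by
  have h1 := log_ge_one hT
  have h2 : 2 * Real.log (Real.log T) ≤ Real.log T := two_log_le h1
  unfold epsT
  rw [div_le_one (by linarith)]
  exact h2

lemma rpow_half_add {T : ℕ} (hT : 3 ≤ T) :
    (T:ℝ) ^ ((1:ℝ)/2 + epsT T / 2) = Real.sqrt T * Real.log T := by
  have hTpos : (0:ℝ) < T := by positivity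
  have h1 := log_ge_one hT
  have hlogpos : (0:ℝ) < Real.log T := by linarith
  rw [Real.rpow_add hTpos]
  congr 1
  · exact (Real.sqrt_eq_rpow _).symm
  · rw [Real.rpow_def_of_pos hTpos]
    rw [show Real.log (T:ℝ) * (epsT T / 2) = Real.log (Real.log T) by
      unfold epsT; field_simp]
    exact Real.exp_log hlogpos

lemma rpow_epsT {T : ℕ} (hT : 3 ≤ T) :
    (T:ℝ) ^ (epsT T) = (Real.log T) ^ 2 := by
  have hTpos : (0:ℝ) < T := by positivity
  have h1 := log_ge_one hT
  have hlogpos : (0:ℝ) < Real.log T := by linarith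
  rw [Real.rpow_def_of_pos hTpos]
  rw [show Real.log (T:ℝ) * epsT T = 2 * Real.log (Real.log T) by
    unfold epsT; field_simp]
  rw [show (2:ℝ) * Real.log (Real.log T) = Real.log (Real.log T) + Real.log (Real.log T) by ring,
    Real.exp_add, Real.exp_log hlogpos]
  ring

lemma log_le_two_sqrt' {u : ℝ} (hu : 0 < u) : Real.log u ≤ 2 * Real.sqrt u := by
  have h1 : Real.log (Real.sqrt u) ≤ Real.sqrt u - 1 :=
    Real.log_le_sub_one_of_pos (Real.sqrt_pos.mpr hu)
  have h2 : Real.log (Real.sqrt u) = Real.log u / 2 := Real.log_sqrt hu.le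
  linarith [Real.sqrt_nonneg u]

/-- `(log T)^2 ≤ √T` for `T ≥ 3^16`. -/
lemma logsq_le_sqrt {T : ℕ} (hT : 3^16 ≤ T) : (Real.log T)^2 ≤ Real.sqrt T := by
  have hTpos : (0:ℝ) < T := by
    have : (0:ℕ) < T := lt_of_lt_of_le (by norm_num) hT
    exact_mod_cast this
  set s1 := Real.sqrt T with hs1
  set s2 := Real.sqrt s1 with hs2
  set s3 := Real.sqrt s2 with hs3
  set s4 := Real.sqrt s3 with hs4
  have h1 : (3:ℝ)^16 ≤ (T:ℝ) := by exact_mod_cast hT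
  have hs1v : (3:ℝ)^8 ≤ s1 := by
    rw [hs1, show ((3:ℝ)^16) = ((3:ℝ)^8)^2 by ring] at *
    calc (3:ℝ)^8 = Real.sqrt (((3:ℝ)^8)^2) := (Real.sqrt_sq (by positivity)).symm
      _ ≤ Real.sqrt T := Real.sqrt_le_sqrt h1
  have hs2v : (3:ℝ)^4 ≤ s2 := by
    calc (3:ℝ)^4 = Real.sqrt (((3:ℝ)^4)^2) := (Real.sqrt_sq (by positivity)).symm
      _ ≤ s2 := Real.sqrt_le_sqrt (by rw [show (((3:ℝ)^4)^2) = (3:ℝ)^8 by ring]; exact hs1v)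
  have hs3v : (3:ℝ)^2 ≤ s3 := by
    calc (3:ℝ)^2 = Real.sqrt (((3:ℝ)^2)^2) := (Real.sqrt_sq (by positivity)).symm
      _ ≤ s3 := Real.sqrt_le_sqrt (by rw [show (((3:ℝ)^2)^2) = (3:ℝ)^4 by ring]; exact hs2v)
  have hs4v : (3:ℝ) ≤ s4 := by
    calc (3:ℝ) = Real.sqrt ((3:ℝ)^2) := (Real.sqrt_sq (by positivity)).symm
      _ ≤ s4 := Real.sqrt_le_sqrt hs3v
  have hs1p : 0 < s1 := Real.sqrt_pos.mpr hTpos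
  have hs2p : 0 < s2 := Real.sqrt_pos.mpr hs1p
  have hs3p : 0 < s3 := Real.sqrt_pos.mpr hs2p
  have hs4p : 0 < s4 := Real.sqrt_pos.mpr hs3p
  -- log T = 16 log s4
  have hl1 : Real.log s1 = Real.log T / 2 := Real.log_sqrt hTpos.le
  have hl2 : Real.log s2 = Real.log s1 / 2 := Real.log_sqrt hs1p.le
  have hl3 : Real.log s3 = Real.log s2 / 2 := Real.log_sqrt hs2p.le
  have hl4 : Real.log s4 = Real.log s3 / 2 := Real.log_sqrt hs3p.le
  have hlog : Real.log T = 16 * Real.log s4 := by rw [hl4, hl3, hl2, hl1]; ring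
  have hle : Real.log s4 ≤ s4 - 1 := Real.log_le_sub_one_of_pos hs4p
  -- s4^4 = s2
  have h42 : s4^2 = s3 := Real.sq_sqrt hs3p.le
  have h32 : s3^2 = s2 := Real.sq_sqrt hs2p.le
  have h22 : s2^2 = s1 := Real.sq_sqrt hs1p.le
  -- log T ≤ 16 s4 ≤ s4^4 = s2, so (log T)^2 ≤ s2^2 = s1
  have hlog2 : Real.log T ≤ s2 := by
    have h16 : 16 * s4 ≤ s4^4 := by nlinarith
    have : s4^4 = s2 := by rw [show s4^4 = (s4^2)^2 by ring, h42, h32]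
    nlinarith
  have hlognn : 0 ≤ Real.log T := Real.log_nonneg (by nlinarith)
  calc (Real.log T)^2 ≤ s2^2 := by nlinarith
    _ = s1 := h22

/-- eventually `epsT T ≤ δ` for any `δ > 0`, with explicit threshold. -/
lemma epsT_small {δ : ℝ} (hδ : 0 < δ) :
    ∀ T : ℕ, Nat.ceil (Real.exp (16/δ^2)) + 3 ≤ T → epsT T ≤ δ := by
  intro T hT
  have hTR : Real.exp (16/δ^2) ≤ (T:ℝ) := by
    calc Real.exp (16/δ^2) ≤ (Nat.ceil (Real.exp (16/δ^2)) : ℝ) := Nat.le_ceil _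
      _ ≤ (T:ℝ) := by exact_mod_cast le_trans (Nat.le_add_right _ 3) hT
  have hlog : 16/δ^2 ≤ Real.log T := by
    calc 16/δ^2 = Real.log (Real.exp (16/δ^2)) := (Real.log_exp _).symm
      _ ≤ Real.log T := Real.log_le_log (Real.exp_pos _) hTR
  have hupos : (0:ℝ) < 16/δ^2 := by positivity
  have hu : (0:ℝ) < Real.log T := lt_of_lt_of_le hupos hlog
  set u := Real.log T with hudef
  have hsu : Real.sqrt u * Real.sqrt u = u := Real.mul_self_sqrt hu.le
  have hsqu : 4/δ ≤ Real.sqrt u := by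
    calc 4/δ = Real.sqrt ((4/δ)^2) := (Real.sqrt_sq (by positivity)).symm
      _ ≤ Real.sqrt u := Real.sqrt_le_sqrt (by rw [show ((4/δ)^2) = 16/δ^2 by ring]; exact hlog)
  have hsup : 0 < Real.sqrt u := Real.sqrt_pos.mpr hu
  have hlu : Real.log u ≤ 2 * Real.sqrt u := log_le_two_sqrt' hu
  -- epsT T = 2 log u / u ≤ 4 √u / u = 4/√u ≤ δ
  unfold epsT
  rw [← hudef, div_le_iff₀ hu]
  have : δ * u = δ * Real.sqrt u * Real.sqrt u := by rw [mul_assoc, hsu]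
  rw [this]
  have h4 : (4:ℝ) ≤ δ * Real.sqrt u := by
    rw [show (4:ℝ) = δ * (4/δ) by field_simp]
    exact mul_le_mul_of_nonneg_left hsqu hδ.le
  nlinarith

lemma t316 : (3:ℕ) ≤ 3^16 := by norm_num

lemma term1_bound {r : ℝ} (hr : 1/2 ≤ r) :
    ∃ c : ℝ, 0 < c ∧ ∃ T₀ : ℕ, 3^16 ≤ T₀ ∧ ∀ T : ℕ, T₀ ≤ T →
      (T:ℝ) ^ (1 - r * (1 - epsT T)) / (1 - r * (1 - epsT T))
        ≤ c * Real.sqrt T * Real.log T := by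
  rcases lt_trichotomy r 1 with hr1 | hr1 | hr1
  · -- r < 1
    refine ⟨1/(1-r), by (have h : (0:ℝ) < 1-r := by linarith); positivity, 3^16, le_refl _, fun T hT => ?_⟩
    have hT3 : 3 ≤ T := le_trans t316 hT
    have hT1 : (1:ℝ) ≤ (T:ℝ) := by exact_mod_cast le_trans (by norm_num) hT3
    have he0 := epsT_nonneg hT3
    have he1 := epsT_le_one hT3
    have hlog := log_ge_one hT3
    set x := 1 - r * (1 - epsT T) with hx
    have hx1 : 1 - r ≤ x := by nlinarith
    have hx2 : x ≤ 1/2 + epsT T / 2 := by nlinarith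
    have hnum : (T:ℝ) ^ x ≤ Real.sqrt T * Real.log T := by
      rw [← rpow_half_add hT3]
      exact Real.rpow_le_rpow_of_exponent_le hT1 hx2
    have hrhs0 : 0 ≤ Real.sqrt T * Real.log T := by positivity
    calc (T:ℝ) ^ x / x ≤ (Real.sqrt T * Real.log T) / (1 - r) :=
          div_le_div₀ hrhs0 hnum (by linarith) hx1
      _ = 1/(1-r) * Real.sqrt T * Real.log T := by ring
  · -- r = 1
    subst hr1
    refine ⟨1, one_pos, 3^16, le_refl _, fun T hT => ?_⟩
    have hT3 : 3 ≤ T := le_trans t316 hT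
    have hlog := log_ge_one hT3
    have hlogpos : (0:ℝ) < Real.log T := by linarith
    have hlog16 : (16:ℝ) ≤ Real.log T := by
      have h1 : ((3:ℝ))^16 ≤ (T:ℝ) := by exact_mod_cast hT
      have h2 : Real.log ((3:ℝ)^16) ≤ Real.log T := Real.log_le_log (by positivity) h1
      have h3 : Real.log ((3:ℝ)^16) = 16 * Real.log 3 := by
        rw [Real.log_pow]; norm_num
      have h4 : (1:ℝ) ≤ Real.log 3 := by
        have := log_ge_one (T := 3) (le_refl _)
        simpa using this
      nlinarith
    have hll1 : (1:ℝ) ≤ Real.log (Real.log T) := by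
      have he : Real.exp 1 ≤ Real.log T := by
        have := Real.exp_one_lt_d9; linarith
      calc (1:ℝ) = Real.log (Real.exp 1) := (Real.log_exp 1).symm
        _ ≤ Real.log (Real.log T) := Real.log_le_log (Real.exp_pos 1) he
    have hepspos : 0 < epsT T := by
      unfold epsT; positivity
    have hprod : Real.log T * epsT T = 2 * Real.log (Real.log T) := by
      unfold epsT; field_simp
    rw [show 1 - 1 * (1 - epsT T) = epsT T by ring, rpow_epsT hT3,
      div_le_iff₀ hepspos]
    have hsq := logsq_le_sqrt hT
    have h2 : (1:ℝ) ≤ Real.log T * epsT T := by rw [hprod]; linarith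
    calc (Real.log T)^2 = (Real.log T)^2 * 1 := by ring
      _ ≤ Real.sqrt T * (Real.log T * epsT T) := by
          apply mul_le_mul hsq h2 zero_le_one (Real.sqrt_nonneg _)
      _ = 1 * Real.sqrt T * Real.log T * epsT T := by ring
  · -- r > 1
    have hδ : 0 < (r-1)/r := div_pos (by linarith) (by linarith)
    refine ⟨1, one_pos, max (Nat.ceil (Real.exp (16/((r-1)/r)^2)) + 3) (3^16),
      le_max_right _ _, fun T hT => ?_⟩
    have hT3 : 3 ≤ T := le_trans t316 (le_trans (le_max_right _ _) hT)
    have hlog := log_ge_one hT3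
    have heps : epsT T ≤ (r-1)/r :=
      epsT_small hδ T (le_trans (le_max_left _ _) hT)
    have hrδ : r * ((r-1)/r) = r - 1 := by field_simp
    have hm : r * epsT T ≤ r * ((r-1)/r) :=
      mul_le_mul_of_nonneg_left heps (by linarith)
    have hx : 1 - r * (1 - epsT T) ≤ 0 := by
      rw [hrδ] at hm
      have hexp : r * (1 - epsT T) = r - r * epsT T := by ring
      linarith
    have hrhs : 0 ≤ 1 * Real.sqrt T * Real.log T := by positivity
    rcases hx.lt_or_eq with h | h
    · have hTpos : (0:ℝ) < (T:ℝ) := by positivity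
      have := div_neg_of_pos_of_neg
        (Real.rpow_pos_of_pos hTpos (1 - r * (1 - epsT T))) h
      linarith
    · rw [h, div_zero]; exact hrhs

/-- Corollary 1: with the choice
`α(T) = (1/(4·L₁·√(min_{i≠i*} Δ_i)))·(1 - 2·log(log T)/log T)` and the per-arm
pull bounds `N_i(T) ≤ T^{1-2L₁α√Δ_i}/(1-2L₁α√Δ_i) + 2α√(U_i·T)·log T`, combined
with the regret decomposition `R(T) ≤ (max_i b_i/T)·Σ_{i≠i*} N_i(T)`, the
extreme-bandit regret satisfies `R(T) = O(K·log(T)/√T · max_i b_i)`. -/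
theorem maxUCB_regret_corollary (K : ℕ) (hK : 2 ≤ K)
    (b Δ U : Fin K → ℝ) (istar : Fin K)
    (hbnn : ∀ j, 0 ≤ b j) (hUnn : ∀ j, 0 ≤ U j)
    (hΔpos : ∀ j, j ≠ istar → 0 < Δ j)
    (L1 : ℝ) (hL1 : 0 < L1)
    (hnonempty : (Finset.univ.erase istar).Nonempty)
    (Δmin : ℝ) (hΔmin : Δmin = (Finset.univ.erase istar).inf' hnonempty Δ)
    (α : ℕ → ℝ)
    (hα : ∀ T : ℕ, α T = 1 / (4 * L1 * Real.sqrt Δmin)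
        * (1 - 2 * Real.log (Real.log T) / Real.log T))
    (N : ℕ → Fin K → ℝ) (R : ℕ → ℝ)
    (hN : ∀ T : ℕ, 2 ≤ T → ∀ j, j ≠ istar →
      N T j ≤ (T : ℝ) ^ (1 - 2 * L1 * α T * Real.sqrt (Δ j))
            / (1 - 2 * L1 * α T * Real.sqrt (Δ j))
          + 2 * α T * Real.sqrt (U j * T) * Real.log T)
    (hR : ∀ T : ℕ, 2 ≤ T →
      R T ≤ (Finset.univ.sup' ⟨istar, Finset.mem_univ istar⟩ b / T)
          * ∑ j ∈ Finset.univ.erase istar, N T j) :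
    ∃ C : ℝ, 0 < C ∧ ∃ T₀ : ℕ, ∀ T : ℕ, T₀ ≤ T →
      R T ≤ C * ((K : ℝ) * Real.log T / Real.sqrt T)
          * Finset.univ.sup' ⟨istar, Finset.mem_univ istar⟩ b := by
  have hΔminpos : 0 < Δmin := by
    rw [hΔmin, Finset.lt_inf'_iff]
    intro j hj
    exact hΔpos j (Finset.mem_erase.mp hj).1
  have hsΔmin : 0 < Real.sqrt Δmin := Real.sqrt_pos.mpr hΔminpos
  set A := 1 / (4 * L1 * Real.sqrt Δmin) with hAdef
  have hA : 0 < A := by positivity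
  set S := Finset.univ.erase istar with hS
  set M := Finset.univ.sup' ⟨istar, Finset.mem_univ istar⟩ b with hM
  have hM0 : 0 ≤ M := le_trans (hbnn istar) (Finset.le_sup' b (Finset.mem_univ istar))
  -- per-arm bound
  have key : ∀ j : Fin K, ∃ c : ℝ, 0 < c ∧ ∃ T₀ : ℕ, 3^16 ≤ T₀ ∧
      ∀ T : ℕ, T₀ ≤ T → j ∈ S → N T j ≤ c * Real.sqrt T * Real.log T := by
    intro j
    by_cases hj : j ∈ S
    · have hji : j ≠ istar := (Finset.mem_erase.mp hj).1
      set r := Real.sqrt (Δ j) / (2 * Real.sqrt Δmin) with hrdef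
      have hdle : Real.sqrt Δmin ≤ Real.sqrt (Δ j) := by
        apply Real.sqrt_le_sqrt
        rw [hΔmin]
        exact Finset.inf'_le Δ hj
      have hr : 1/2 ≤ r := by
        rw [hrdef, le_div_iff₀ (by positivity)]
        nlinarith
      obtain ⟨c1, hc1, T₀, hT₀3, hterm1⟩ := term1_bound hr
      refine ⟨c1 + 2 * A * Real.sqrt (U j) + 1, by positivity, T₀, hT₀3, fun T hT hmem => ?_⟩
      have hT3 : 3 ≤ T := le_trans (le_trans (by norm_num) hT₀3) hT
      have hT2 : 2 ≤ T := by omega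
      have he0 := epsT_nonneg hT3
      have he1 := epsT_le_one hT3
      have hlog1 := log_ge_one hT3
      have hαT : α T = A * (1 - epsT T) := by rw [hα T]; rfl
      have hexp : 2 * L1 * α T * Real.sqrt (Δ j) = r * (1 - epsT T) := by
        rw [hαT, hrdef, hAdef]
        field_simp
        ring
      have hb := hN T hT2 j hji
      rw [hexp] at hb
      have ht1 := hterm1 T hT
      have hα0 : 0 ≤ α T := by rw [hαT]; nlinarith
      have hαA : α T ≤ A := by rw [hαT]; nlinarith
      have hsqU : Real.sqrt (U j * T) = Real.sqrt (U j) * Real.sqrt T :=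
        Real.sqrt_mul (hUnn j) _
      have ht2 : 2 * α T * Real.sqrt (U j * T) * Real.log T
          ≤ 2 * A * Real.sqrt (U j) * Real.sqrt T * Real.log T := by
        rw [hsqU]
        have h1 : 0 ≤ Real.sqrt (U j) * Real.sqrt T := by positivity
        have h2 : (0:ℝ) ≤ Real.log T := by linarith
        calc 2 * α T * (Real.sqrt (U j) * Real.sqrt T) * Real.log T
            = (2 * (Real.sqrt (U j) * Real.sqrt T) * Real.log T) * α T := by ring
          _ ≤ (2 * (Real.sqrt (U j) * Real.sqrt T) * Real.log T) * A := by
              apply mul_le_mul_of_nonneg_left hαA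
              apply mul_nonneg (by positivity) h2
          _ = 2 * A * Real.sqrt (U j) * Real.sqrt T * Real.log T := by ring
      have hrhs0 : (0:ℝ) ≤ Real.sqrt T * Real.log T := by positivity
      calc N T j ≤ (T:ℝ) ^ (1 - r * (1 - epsT T)) / (1 - r * (1 - epsT T))
            + 2 * α T * Real.sqrt (U j * T) * Real.log T := hb
        _ ≤ c1 * Real.sqrt T * Real.log T
            + 2 * A * Real.sqrt (U j) * Real.sqrt T * Real.log T := add_le_add ht1 ht2
        _ = (c1 + 2 * A * Real.sqrt (U j)) * Real.sqrt T * Real.log T := by ring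
        _ ≤ (c1 + 2 * A * Real.sqrt (U j) + 1) * Real.sqrt T * Real.log T := by nlinarith
    · exact ⟨1, one_pos, 3^16, le_refl _, fun T _ hmem => absurd hmem hj⟩
  choose c hc T₀f hT₀3 hbound using key
  set Cs := ∑ j ∈ S, c j with hCs
  have hCspos : 0 < Cs := Finset.sum_pos (fun j _ => hc j) hnonempty
  refine ⟨Cs, hCspos, Finset.univ.sup T₀f, fun T hT => ?_⟩
  have hTj : ∀ j : Fin K, T₀f j ≤ T :=
    fun j => le_trans (Finset.le_sup (Finset.mem_univ j)) hT
  have hT3 : 3 ≤ T := le_trans (le_trans (by norm_num) (hT₀3 istar)) (hTj istar)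
  have hT2 : 2 ≤ T := by omega
  have hlog1 := log_ge_one hT3
  have hTpos : (0:ℝ) < T := by positivity
  have hsT : 0 < Real.sqrt T := Real.sqrt_pos.mpr hTpos
  have hsum : ∑ j ∈ S, N T j ≤ Cs * (Real.sqrt T * Real.log T) := by
    rw [hCs, Finset.sum_mul]
    apply Finset.sum_le_sum
    intro j hj
    calc N T j ≤ c j * Real.sqrt T * Real.log T := hbound j T (hTj j) hj
      _ = c j * (Real.sqrt T * Real.log T) := by ring
  have hstep : R T ≤ (M / T) * (Cs * (Real.sqrt T * Real.log T)) := by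
    calc R T ≤ (M / T) * ∑ j ∈ S, N T j := hR T hT2
      _ ≤ (M / T) * (Cs * (Real.sqrt T * Real.log T)) := by
          apply mul_le_mul_of_nonneg_left hsum (by positivity)
  have hss : Real.sqrt T * Real.sqrt T = (T:ℝ) := Real.mul_self_sqrt hTpos.le
  have heq : (M / T) * (Cs * (Real.sqrt T * Real.log T))
      = Cs * ((1:ℝ) * Real.log T / Real.sqrt T) * M := by
    field_simp
    linear_combination M * hss
  have hK1 : (1:ℝ) ≤ (K:ℝ) := by exact_mod_cast le_trans (by norm_num) hK
  have hfin : Cs * ((1:ℝ) * Real.log T / Real.sqrt T) * M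
      ≤ Cs * ((K:ℝ) * Real.log T / Real.sqrt T) * M := by
    apply mul_le_mul_of_nonneg_right _ hM0
    apply mul_le_mul_of_nonneg_left _ hCspos.le
    rw [div_le_div_iff₀ hsT hsT]
    have h0 : (0:ℝ) ≤ Real.log T * Real.sqrt T :=
      mul_nonneg (le_trans zero_le_one hlog1) hsT.le
    nlinarith [mul_le_mul_of_nonneg_right hK1 h0]
  calc R T ≤ (M / T) * (Cs * (Real.sqrt T * Real.log T)) := hstep
    _ = Cs * ((1:ℝ) * Real.log T / Real.sqrt T) * M := heq
    _ ≤ Cs * ((K:ℝ) * Real.log T / Real.sqrt T) * M := hfin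
end
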